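/- arXiv:1807.07198 — 2 statements merged into one kernel-verified Lean document; each statement's English description precedes it below -/
import Mathlib

section
/- Let W_X be a Coxeter group of type A_n (the symmetric group on n+1 letters with its standard Coxeter generators x_1,…,x_n). Let Y_1, Y_2 ⊆ {x_1,…,x_n} and let ψ : Y_1 → Y_2 be an isomorphism of the induced labeled Coxeter graphs, i.e., a bijection with m_{ψ(y),ψ(y′)} = m_{y,y′} for all y, y′ ∈ Y_1. Then there exists v ∈ W_X such that v⁻¹ y v = ψ(y) for all y ∈ Y_1. -/
namespace ArtinTits

variable {B : Type*}

/-- The alternating product `a b a b ⋯` with `m` factors, starting with `a`. -/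
def altProd {G : Type*} [Monoid G] (a b : G) : ℕ → G
  | 0 => 1
  | n + 1 => a * altProd b a n

/-- The braid relations defining the Artin–Tits group of a Coxeter matrix:
`Π(σ_s, σ_t; m_{s,t}) = Π(σ_t, σ_s; m_{s,t})` whenever `m_{s,t} ≠ ∞` (here `∞` is coded by `0`). -/
def artinRelationsSet (M : CoxeterMatrix B) : Set (FreeGroup B) :=
  {r | ∃ s t : B, M s t ≠ 0 ∧
    r = altProd (FreeGroup.of s) (FreeGroup.of t) (M s t) *
        (altProd (FreeGroup.of t) (FreeGroup.of s) (M s t))⁻¹}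

/-- The Artin–Tits group of a Coxeter matrix. -/
abbrev ArtinGroup (M : CoxeterMatrix B) : Type _ := PresentedGroup (artinRelationsSet M)

/-- The standard generator `σ_s` of the Artin–Tits group. -/
def σ (M : CoxeterMatrix B) (s : B) : ArtinGroup M := PresentedGroup.of s

/-- The standard parabolic subgroup `A_X` of the Artin–Tits group. -/
def AP (M : CoxeterMatrix B) (X : Set B) : Subgroup (ArtinGroup M) :=
  Subgroup.closure (σ M '' X)

/-- The standard parabolic subgroup `W_X` of the Coxeter group. -/
def WP (M : CoxeterMatrix B) (X : Set B) : Subgroup M.Group :=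
  Subgroup.closure (M.simple '' X)

/-- A subgroup `H ≤ G` is conjugacy stable if any two elements of `H` which are conjugate
in `G` are already conjugate by an element of `H`. -/
def IsConjugacyStable {G : Type*} [Group G] (H : Subgroup G) : Prop :=
  ∀ a b : G, a ∈ H → b ∈ H → (∃ g : G, g⁻¹ * a * g = b) → ∃ h ∈ H, h⁻¹ * a * h = b

/-- Property `⋆_W` for the pair `(W_X, W_S)`. -/
def StarW (M : CoxeterMatrix B) (X : Set B) : Prop :=
  ∀ Y₁ Y₂ : Set B, Y₁ ⊆ X → Y₂ ⊆ X → ∀ w : M.Group,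
    (fun x => w⁻¹ * x * w) '' (M.simple '' Y₁) = M.simple '' Y₂ →
    ∃ v ∈ WP M X, ∀ y ∈ Y₁, v⁻¹ * M.simple y * v = w⁻¹ * M.simple y * w

/-- Property `⋆_A` for the pair `(A_X, A_S)`. -/
def StarA (M : CoxeterMatrix B) (X : Set B) : Prop :=
  ∀ Y₁ Y₂ : Set B, Y₁ ⊆ X → Y₂ ⊆ X → ∀ g : ArtinGroup M,
    (fun x => g⁻¹ * x * g) '' (σ M '' Y₁) = σ M '' Y₂ →
    ∃ h ∈ AP M X, ∀ y ∈ Y₁, h⁻¹ * σ M y * h = g⁻¹ * σ M y * g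

/-- Adjacency in the Coxeter graph: `s` and `t` are joined by an edge iff `m_{s,t} ≥ 3`
(where the value `0` codes `∞`, which also gives an edge). -/
def Adj (M : CoxeterMatrix B) (s t : B) : Prop := s ≠ t ∧ M s t ≠ 2

/-- `s` and `t` are connected by a path of the Coxeter graph staying inside `X`. -/
def ReachIn (M : CoxeterMatrix B) (X : Set B) (s t : B) : Prop :=
  Relation.ReflTransGen (fun a b => a ∈ X ∧ b ∈ X ∧ Adj M a b) s t

/-- The Coxeter graph induced on `X` is connected. -/
def ConnectedIn (M : CoxeterMatrix B) (X : Set B) : Prop :=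
  ∀ s ∈ X, ∀ t ∈ X, ReachIn M X s t

/-- The Coxeter matrix `M` restricted to `X` is of the type of the Coxeter matrix `M'`,
i.e. there is a bijection transporting one to the other. -/
def IsOfType {B' : Type*} (M : CoxeterMatrix B) (X : Set B) (M' : CoxeterMatrix B') : Prop :=
  ∃ e : X ≃ B', ∀ a b : X, M a.val b.val = M' (e a) (e b)

/-- The Coxeter matrix of type `Bₙ` with the paper's labelling: vertices `0, …, n-1`
(representing `s_1, …, s_n`), `m_{s_1, s_2} = 4` and `m_{s_i, s_{i+1}} = 3` for `i ≥ 2`. -/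
def Bmat (n : ℕ) : CoxeterMatrix (Fin n) where
  M := Matrix.of fun i j : Fin n ↦
    if i = j then 1
      else (if (i.val = 0 ∧ j.val = 1) ∨ (j.val = 0 ∧ i.val = 1) then 4
        else (if (j : ℕ) + 1 = i ∨ (i : ℕ) + 1 = j then 3 else 2))
  isSymm := by unfold Matrix.IsSymm; aesop
  diagonal := by simp
  off_diagonal := by aesop

/-- The Coxeter matrix of type `Dₙ` with the paper's labelling: vertices `0, …, n-1`
(representing `s_1, …, s_n`), with edges `{s_1, s_3}`, `{s_2, s_3}` and `{s_i, s_{i+1}}`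
for `i ≥ 3`, all labelled `3`. -/
def Dmat (n : ℕ) : CoxeterMatrix (Fin n) where
  M := Matrix.of fun i j : Fin n ↦
    if i = j then 1
      else (if (i.val = 0 ∧ j.val = 2) ∨ (j.val = 0 ∧ i.val = 2) then 3
        else (if i.val = 0 ∨ j.val = 0 then 2
          else (if (j : ℕ) + 1 = i ∨ (i : ℕ) + 1 = j then 3 else 2)))
  isSymm := by unfold Matrix.IsSymm; aesop
  diagonal := by simp
  off_diagonal := by aesop

end ArtinTits

/-! The Coxeter group of type `A_n` is the symmetric group on `n + 1` points, `s_i` acting as the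
transposition `(i, i+1)`: these transpositions satisfy the Coxeter relations and generate, and the
group has at most `(n+1)!` elements because the products `s_n ⋯ s_{n-k+1}`, `0 ≤ k ≤ n + 1`,
represent all cosets of the parabolic subgroup of type `A_{n-1}`.

Conjugating `(i, i+1)` by a permutation `π` gives `(π i, π (i+1))`, so it suffices to find `π`
carrying the edge `{y, y+1}` of the path onto `{ψ y, ψ y + 1}` for every `y ∈ Y₁`. Since `ψ`
preserves adjacency, it maps each maximal run of consecutive elements of `Y₁` onto a run of `Y₂`,
preserving or reversing the order. Sending the endpoints of every edge of the run accordingly is a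
well-defined injective map on the vertices touched by `Y₁`, and it extends to a permutation. -/

open Equiv

namespace Equiv.Perm

variable {α : Type*} [DecidableEq α]

theorem swap_mul_swap_pow_three [Fintype α] {a b c : α} (hab : a ≠ b) (hac : a ≠ c)
    (hbc : b ≠ c) :
    (swap a b * swap a c) ^ 3 = 1 :=
  (isThreeCycle_swap_mul_swap_same hab hac hbc).orderOf ▸ pow_orderOf_eq_one _

theorem swap_mul_swap_pow_two {a b c d : α} (h : [a, b, c, d].Nodup) :
    (swap a b * swap c d) ^ 2 = 1 := by
  rw [(disjoint_swap_swap h).commute.mul_pow, pow_two, pow_two, swap_mul_self, swap_mul_self,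
    one_mul]

theorem exists_apply_eq_of_eq_iff {ι α : Type*} [Finite α] {f g : ι → α}
    (h : ∀ i j, f i = f j ↔ g i = g j) : ∃ σ : Perm α, ∀ i, σ (f i) = g i := by
  choose r hr using fun x : Set.range f => x.2
  obtain ⟨σ, hσ⟩ := Perm.exists_extending_pair (Subtype.val : Set.range f → α) (g ∘ r)
    Subtype.val_injective fun x y hxy => Subtype.ext <| by
      rw [← hr x, ← hr y]; exact (h _ _).2 hxy
  exact ⟨σ, fun i => (hσ ⟨f i, i, rfl⟩).trans ((h _ _).1 (hr ⟨f i, i, rfl⟩))⟩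

end Equiv.Perm

def Fin.edgeEnd {n : ℕ} (i : Fin n) (b : Bool) : Fin (n + 1) := bif b then i.succ else i.castSucc

@[simp] theorem Fin.val_edgeEnd {n : ℕ} (i : Fin n) (b : Bool) :
    (i.edgeEnd b : ℕ) = i + b.toNat := by
  cases b <;> rfl

namespace CoxeterSystem

variable {B W : Type*} [Group W] {M : CoxeterMatrix B} (cs : CoxeterSystem M W)

theorem simple_mul_simple_comm_of_eq_two {i i' : B} (h : M i i' = 2) :
    cs.simple i * cs.simple i' = cs.simple i' * cs.simple i := by
  simpa [braidWord, h, M.symmetric i' i, alternatingWord, wordProd] using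
    cs.wordProd_braidWord_eq i i'

theorem simple_braid_of_eq_three {i i' : B} (h : M i i' = 3) :
    cs.simple i * cs.simple i' * cs.simple i = cs.simple i' * cs.simple i * cs.simple i' := by
  simpa [braidWord, h, M.symmetric i' i, alternatingWord, wordProd, mul_assoc] using
    (cs.wordProd_braidWord_eq i i').symm

end CoxeterSystem

namespace CoxeterMatrix.A

variable {n : ℕ}

local notation "s" => CoxeterSystem.simple (CoxeterMatrix.toCoxeterSystem (CoxeterMatrix.A _))

theorem apply_eq_three_iff {i j : Fin n} :
    CoxeterMatrix.A n i j = 3 ↔ (SimpleGraph.pathGraph n).Adj i j := by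
  rw [SimpleGraph.pathGraph_adj]
  simp only [CoxeterMatrix.A, Matrix.of_apply]
  split_ifs with hij hadj
  · subst hij; simp
  · exact iff_of_true rfl (Or.comm.mp hadj)
  · exact iff_of_false (by decide) (by rwa [Or.comm])

theorem apply_eq_two {i j : Fin n} (h : (i : ℕ) + 1 < j ∨ (j : ℕ) + 1 < i) :
    CoxeterMatrix.A n i j = 2 := by
  have : i ≠ j := by rintro rfl; omega
  simp only [CoxeterMatrix.A, Matrix.of_apply, this, if_false]
  rw [if_neg (by omega)]

theorem simple_mul_simple_comm {i j : Fin n} (h : (i : ℕ) + 1 < j ∨ (j : ℕ) + 1 < i) :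
    s i * s j = s j * s i :=
  (CoxeterMatrix.A n).toCoxeterSystem.simple_mul_simple_comm_of_eq_two (apply_eq_two h)

theorem simple_braid {i j : Fin n} (h : (SimpleGraph.pathGraph n).Adj i j) :
    s i * s j * s i = s j * s i * s j :=
  (CoxeterMatrix.A n).toCoxeterSystem.simple_braid_of_eq_three (apply_eq_three_iff.2 h)

variable (n) in
theorem isLiftable_simple_castSucc :
    (CoxeterMatrix.A n).IsLiftable fun i => s i.castSucc := by
  intro i j
  have h := (CoxeterMatrix.A (n + 1)).toCoxeterSystem.simple_mul_simple_pow i.castSucc j.castSucc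
  simpa [CoxeterMatrix.A, Fin.ext_iff] using h

variable (n) in
noncomputable def castSuccHom : (CoxeterMatrix.A n).Group →* (CoxeterMatrix.A (n + 1)).Group :=
  (CoxeterMatrix.A n).toCoxeterSystem.lift ⟨_, isLiftable_simple_castSucc n⟩

theorem castSuccHom_simple (i : Fin n) : castSuccHom n (s i) = s i.castSucc :=
  (CoxeterMatrix.A n).toCoxeterSystem.lift_apply_simple (isLiftable_simple_castSucc n) i

variable (n) in
/-- The products `s_n s_{n-1} ⋯ s_{n-k+1}` for `k ≤ n + 1` represent the right cosets of the
image of `castSuccHom n`. -/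
noncomputable def descendingProd : ℕ → (CoxeterMatrix.A (n + 1)).Group
  | 0 => 1
  | k + 1 => descendingProd k * s ⟨n - k, by omega⟩

theorem descendingProd_succ {k : ℕ} {j : Fin (n + 1)} (hj : (j : ℕ) = n - k) :
    descendingProd n (k + 1) = descendingProd n k * s j := by
  rw [descendingProd, show (⟨n - k, _⟩ : Fin (n + 1)) = j from Fin.ext hj.symm]

theorem simple_mul_descendingProd {i : Fin (n + 1)} {k : ℕ} (h : (i : ℕ) + 1 < n + 1 - k) :
    s i * descendingProd n k = descendingProd n k * s i := by
  induction k with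
  | zero => simp [descendingProd]
  | succ k ih =>
    rw [descendingProd, ← mul_assoc, ih (by omega), mul_assoc,
      simple_mul_simple_comm (by simp; omega), mul_assoc]

theorem descendingProd_mul_simple_succ {i : Fin n} {k : ℕ} (hk : k ≤ n + 1) (h : n < i + k) :
    descendingProd n k * s i.succ = s i.castSucc * descendingProd n k := by
  induction k with
  | zero => omega
  | succ k ih =>
    rcases Nat.lt_or_ge n (i + k) with hlt | hge
    · rw [descendingProd, mul_assoc, simple_mul_simple_comm (by simp; omega), ← mul_assoc,
        ih (by omega) hlt, mul_assoc]
    · obtain ⟨k, rfl⟩ : ∃ k', k = k' + 1 := ⟨k - 1, by omega⟩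
      have hD : descendingProd n (k + 2) = descendingProd n k * s i.succ * s i.castSucc := by
        rw [descendingProd_succ (j := i.castSucc) (by simp; omega),
          descendingProd_succ (j := i.succ) (by simp; omega)]
      calc descendingProd n (k + 1 + 1) * s i.succ
          = descendingProd n k * (s i.succ * s i.castSucc * s i.succ) := by
            rw [hD]; simp only [mul_assoc]
        _ = descendingProd n k * (s i.castSucc * s i.succ * s i.castSucc) := by
            rw [simple_braid (SimpleGraph.pathGraph_adj.2 (by simp))]
        _ = s i.castSucc * descendingProd n (k + 1 + 1) := by
            rw [hD, ← mul_assoc, ← mul_assoc,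
              ← simple_mul_descendingProd (i := i.castSucc) (by simp; omega)]
            simp only [mul_assoc]

theorem exists_eq_castSuccHom_mul_descendingProd (w : (CoxeterMatrix.A (n + 1)).Group) :
    ∃ g k, k ≤ n + 1 ∧ w = castSuccHom n g * descendingProd n k := by
  induction w using (CoxeterMatrix.A (n + 1)).toCoxeterSystem.simple_induction_right with
  | one => exact ⟨1, 0, by omega, by simp [descendingProd]⟩
  | mul_simple_right w i ih =>
    obtain ⟨g, k, hk, rfl⟩ := ih
    simp only [mul_assoc]
    rcases lt_trichotomy ((i : ℕ) + 1) (n + 1 - k) with hlt | heq | hgt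
    · obtain ⟨j, rfl⟩ := Fin.eq_castSucc_of_ne_last (x := i) <| by
        rintro rfl; rw [Fin.val_last] at hlt; omega
      refine ⟨g * s j, k, hk, ?_⟩
      rw [map_mul, castSuccHom_simple, mul_assoc, simple_mul_descendingProd hlt]
    · exact ⟨g, k + 1, by omega, by rw [descendingProd_succ (j := i) (by omega)]⟩
    · rcases Nat.lt_or_ge (n + 1 - k) i with hgt' | hle
      · obtain ⟨j, rfl⟩ := Fin.exists_succ_eq_of_ne_zero (x := i) (by rintro rfl; simp at hgt')
        refine ⟨g * s j, k, hk, ?_⟩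
        rw [map_mul, castSuccHom_simple, mul_assoc,
          descendingProd_mul_simple_succ hk (by simp at hgt'; omega)]
      · obtain ⟨k, rfl⟩ : ∃ k', k = k' + 1 := ⟨k - 1, by omega⟩
        refine ⟨g, k, by omega, ?_⟩
        rw [descendingProd_succ (j := i) (by omega), mul_assoc,
          CoxeterSystem.simple_mul_simple_self, mul_one]

open Nat in
theorem finite_and_natCard_le (n : ℕ) :
    Finite (CoxeterMatrix.A n).Group ∧ Nat.card (CoxeterMatrix.A n).Group ≤ (n + 1)! := by
  induction n with
  | zero =>
    have h1 (w : (CoxeterMatrix.A 0).Group) : w = 1 :=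
      (CoxeterMatrix.A 0).toCoxeterSystem.simple_induction_right (p := (· = 1)) w rfl
        fun _ i _ => i.elim0
    have : Subsingleton (CoxeterMatrix.A 0).Group := ⟨fun a b => (h1 a).trans (h1 b).symm⟩
    exact ⟨inferInstance, by simp [Nat.card_unique]⟩
  | succ n ih =>
    obtain ⟨_, hcard⟩ := ih
    have hsurj : Function.Surjective
        fun p : (CoxeterMatrix.A n).Group × Fin (n + 2) =>
          castSuccHom n p.1 * descendingProd n p.2 := by
      intro w
      obtain ⟨g, k, hk, rfl⟩ := exists_eq_castSuccHom_mul_descendingProd w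
      exact ⟨(g, ⟨k, by omega⟩), rfl⟩
    refine ⟨.of_surjective _ hsurj, ?_⟩
    calc Nat.card (CoxeterMatrix.A (n + 1)).Group
        ≤ Nat.card ((CoxeterMatrix.A n).Group × Fin (n + 2)) :=
          Nat.card_le_card_of_surjective _ hsurj
      _ = Nat.card (CoxeterMatrix.A n).Group * (n + 2) := by simp
      _ ≤ (n + 1)! * (n + 2) := Nat.mul_le_mul_right _ hcard
      _ = (n + 2)! := by rw [Nat.factorial_succ (n + 1), mul_comm]

variable (n) in
theorem isLiftable_swap :
    (CoxeterMatrix.A n).IsLiftable fun i : Fin n => swap i.castSucc i.succ := by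
  intro i j
  simp only [CoxeterMatrix.A, Matrix.of_apply]
  split_ifs with hij hadj
  · simp [hij]
  · rcases hadj with h | h
    · rw [show i.castSucc = j.succ from Fin.ext (by simp [← h]), swap_comm j.castSucc]
      apply Perm.swap_mul_swap_pow_three <;> simp [Fin.ext_iff] <;> omega
    · rw [show j.castSucc = i.succ from Fin.ext (by simp [← h]), swap_comm i.castSucc]
      apply Perm.swap_mul_swap_pow_three <;> simp [Fin.ext_iff] <;> omega
  · apply Perm.swap_mul_swap_pow_two
    simp [Fin.ext_iff] at hij ⊢
    omega

variable (n) in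
noncomputable def toPerm : (CoxeterMatrix.A n).Group →* Perm (Fin (n + 1)) :=
  (CoxeterMatrix.A n).toCoxeterSystem.lift ⟨_, isLiftable_swap n⟩

theorem toPerm_simple (i : Fin n) :
    toPerm n ((CoxeterMatrix.A n).simple i) = swap i.castSucc i.succ :=
  (CoxeterMatrix.A n).toCoxeterSystem.lift_apply_simple (isLiftable_swap n) i

theorem toPerm_surjective : Function.Surjective (toPerm n) := by
  rw [← MonoidHom.mrange_eq_top, eq_top_iff, ← Perm.mclosure_swap_castSucc_succ,
    Submonoid.closure_le]
  rintro _ ⟨i, rfl⟩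
  exact ⟨s i, toPerm_simple i⟩

variable (n) in
noncomputable def mulEquivPerm : (CoxeterMatrix.A n).Group ≃* Perm (Fin (n + 1)) :=
  have := (finite_and_natCard_le n).1
  MulEquiv.ofBijective (toPerm n) <| toPerm_surjective.bijective_of_nat_card_le <| by
    simpa [Fintype.card_perm] using (finite_and_natCard_le n).2

theorem mulEquivPerm_simple (i : Fin n) :
    mulEquivPerm n ((CoxeterMatrix.A n).simple i) = swap i.castSucc i.succ :=
  toPerm_simple i

end CoxeterMatrix.A

namespace ArtinTits

section
variable {n : ℕ} {Y₁ Y₂ : Set (Fin n)} (ψ : Y₁ ≃ Y₂)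

/-- `ψ` maps the maximal run of consecutive elements of `Y₁` through `a` onto a run of `Y₂` in
reverse order; a run of length one counts as not reversed. -/
def Reverses (a : Y₁) : Prop :=
  ∃ b : Y₁, ((a : ℕ) + 1 = b ∧ (ψ b : ℕ) + 1 = ψ a) ∨ ((b : ℕ) + 1 = a ∧ (ψ a : ℕ) + 1 = ψ b)

variable {ψ}

theorem val_apply_eq_iff (a b : Y₁) : (ψ a : ℕ) = ψ b ↔ (a : ℕ) = b := by
  rw [Fin.val_inj, Subtype.val_inj, Fin.val_inj, Subtype.val_inj, ψ.apply_eq_iff_eq]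

variable (hψ : ∀ a b : Y₁,
  (SimpleGraph.pathGraph n).Adj a b ↔ (SimpleGraph.pathGraph n).Adj (ψ a) (ψ b))
include hψ

theorem reverses_iff_of_succ_eq {a b : Y₁} (hab : (a : ℕ) + 1 = b) :
    (Reverses ψ a ↔ (ψ b : ℕ) + 1 = ψ a) ∧ (Reverses ψ b ↔ (ψ b : ℕ) + 1 = ψ a) := by
  have hadj : (ψ a : ℕ) + 1 = ψ b ∨ (ψ b : ℕ) + 1 = ψ a := by
    simpa [SimpleGraph.pathGraph_adj] using (hψ a b).1 (SimpleGraph.pathGraph_adj.2 (.inl hab))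
  constructor
  · refine ⟨fun ⟨c, hc⟩ => ?_, fun h => ⟨b, .inl ⟨hab, h⟩⟩⟩
    have := val_apply_eq_iff (ψ := ψ) b c
    omega
  · refine ⟨fun ⟨c, hc⟩ => ?_, fun h => ⟨a, .inr ⟨hab, h⟩⟩⟩
    have := val_apply_eq_iff (ψ := ψ) a c
    omega

open Classical in
theorem edgeEnd_eq_iff (a b : Y₁) (x y : Bool) :
    (a : Fin n).edgeEnd x = (b : Fin n).edgeEnd y ↔
      (ψ a : Fin n).edgeEnd (x ^^ decide (Reverses ψ a)) =
        (ψ b : Fin n).edgeEnd (y ^^ decide (Reverses ψ b)) := by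
  have hinj := val_apply_eq_iff (ψ := ψ) a b
  have hadj : (a : ℕ) + 1 = b ∨ (b : ℕ) + 1 = a ↔
      (ψ a : ℕ) + 1 = ψ b ∨ (ψ b : ℕ) + 1 = ψ a := by
    simpa [SimpleGraph.pathGraph_adj] using hψ a b
  have hab := fun h => reverses_iff_of_succ_eq hψ (a := a) (b := b) h
  have hba := fun h => reverses_iff_of_succ_eq hψ (a := b) (b := a) h
  have heq : (a : ℕ) = b → (Reverses ψ a ↔ Reverses ψ b) := fun h => by
    rw [Subtype.ext (Fin.ext h)]
  simp only [Fin.ext_iff, Fin.val_edgeEnd]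
  -- `a` and `b` are equal, adjacent or far apart exactly when `ψ a` and `ψ b` are, and on adjacent
  -- edges the orientations agree: a finite case check on the orientations and endpoints.
  by_cases ha : Reverses ψ a <;> by_cases hb : Reverses ψ b <;>
    simp only [ha, hb, decide_true, decide_false, true_iff, false_iff, iff_self, iff_true,
      iff_false, not_true, imp_iff_not_or, or_false] at hab hba heq ⊢ <;>
    cases x <;> cases y <;>
    simp only [Bool.xor_true, Bool.xor_false, Bool.not_true, Bool.not_false, Bool.toNat_true,
      Bool.toNat_false] <;> constructor <;> intro <;> omega

open Classical in
theorem exists_perm_conj_swap_eq :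
    ∃ π : Perm (Fin (n + 1)), ∀ y : Y₁, π * swap (y : Fin n).castSucc (y : Fin n).succ * π⁻¹ =
      swap (ψ y : Fin n).castSucc (ψ y : Fin n).succ := by
  obtain ⟨π, hπ⟩ := Perm.exists_apply_eq_of_eq_iff
    (f := fun p : Y₁ × Bool => (p.1 : Fin n).edgeEnd p.2)
    (g := fun p => (ψ p.1 : Fin n).edgeEnd (p.2 ^^ decide (Reverses ψ p.1)))
    fun p q => edgeEnd_eq_iff hψ p.1 q.1 p.2 q.2
  refine ⟨π, fun y => ?_⟩
  rw [← swap_apply_apply]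
  have h0 : π (y : Fin n).castSucc = _ := hπ (y, false)
  have h1 : π (y : Fin n).succ = _ := hπ (y, true)
  rw [h0, h1]
  by_cases h : Reverses ψ y <;> simp [h, Fin.edgeEnd, swap_comm]
end

open CoxeterMatrix in
theorem typeA_labeled_graph_iso_is_inner_general
    (n : ℕ) (Y₁ Y₂ : Set (Fin n)) (ψ : Y₁ ≃ Y₂)
    (hψ : ∀ a b : Y₁, Aₙ n a.val b.val = Aₙ n (ψ a).val (ψ b).val) :
    ∃ v : (Aₙ n).Group,
      ∀ y : Y₁, v⁻¹ * (Aₙ n).simple y.val * v = (Aₙ n).simple (ψ y).val := by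
  unfold Aₙ at hψ ⊢
  have hadj : ∀ a b : Y₁, (SimpleGraph.pathGraph n).Adj a b ↔
      (SimpleGraph.pathGraph n).Adj (ψ a) (ψ b) := fun a b => by
    rw [← A.apply_eq_three_iff, ← A.apply_eq_three_iff, hψ a b]
  obtain ⟨π, hπ⟩ := exists_perm_conj_swap_eq hadj
  refine ⟨(A.mulEquivPerm n).symm π⁻¹, fun y => (A.mulEquivPerm n).injective ?_⟩
  rw [map_mul, map_mul, map_inv, MulEquiv.apply_symm_apply, inv_inv, A.mulEquivPerm_simple,
    A.mulEquivPerm_simple, hπ]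

open CoxeterMatrix in
/-- Lemma 2(i) of the paper for type `A`: any isomorphism of induced labeled Coxeter graphs
between two subsets of the standard generators of the Coxeter group of type `Aₙ` (the symmetric
group) is induced by conjugation by an element of the group. -/
theorem typeA_labeled_graph_iso_is_inner
    (n : ℕ) (hn : 1 ≤ n) (Y₁ Y₂ : Set (Fin n)) (ψ : Y₁ ≃ Y₂)
    (hψ : ∀ a b : Y₁, Aₙ n a.val b.val = Aₙ n (ψ a).val (ψ b).val) :
    ∃ v : (Aₙ n).Group,
      ∀ y : Y₁, v⁻¹ * (Aₙ n).simple y.val * v = (Aₙ n).simple (ψ y).val :=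
  typeA_labeled_graph_iso_is_inner_general n Y₁ Y₂ ψ hψ

end ArtinTits
end

section
/- Let A_S be the Artin-Tits group of type E_6 with generators σ_1,…,σ_6, and let X = {s_2, s_3, s_4, s_5, s_6} (a standard parabolic subset of type D_5). Then the elements g = σ_2σ_4σ_3 and h = σ_5σ_4σ_3 are conjugate in A_S but are not conjugate in the standard parabolic subgroup A_X generated by {σ_2, σ_3, σ_4, σ_5, σ_6}. In particular, A_X is not conjugacy stable in A_S. -/
namespace ArtinTits

open CoxeterMatrix
open scoped Matrix

theorem map_altProd {G H : Type*} [Monoid G] [Monoid H] (f : G →* H) (a b : G) :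
    ∀ n, f (altProd a b n) = altProd (f a) (f b) n
  | 0 => map_one f
  | n + 1 => by rw [altProd, map_mul, map_altProd f b a n, altProd]

section ArtinGroup

variable {B : Type*} (M : CoxeterMatrix B)

theorem σ_braid {s t : B} (h : M s t ≠ 0) :
    altProd (σ M s) (σ M t) (M s t) = altProd (σ M t) (σ M s) (M s t) := by
  have := PresentedGroup.mk_eq_mk_of_mul_inv_mem (rels := artinRelationsSet M) ⟨s, t, h, rfl⟩
  rwa [map_altProd, map_altProd] at this

theorem commute_σ {s t : B} (h : M s t = 2) : Commute (σ M s) (σ M t) := by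
  have := σ_braid M (s := s) (t := t) (by simp [h])
  simpa [h, altProd, Commute, SemiconjBy] using this

theorem semiconjBy_σ {s t : B} (h : M s t = 3) :
    SemiconjBy (σ M s * σ M t) (σ M s) (σ M t) := by
  simpa [h, altProd, SemiconjBy, mul_assoc] using σ_braid M (s := s) (t := t) (by simp [h])

theorem σ_mem_AP {X : Set B} {s : B} (hs : s ∈ X) : σ M s ∈ AP M X :=
  Subgroup.subset_closure ⟨s, hs, rfl⟩

def ArtinGroup.lift {G : Type*} [Group G] (f : B → G)
    (hf : ∀ s t, M s t ≠ 0 → altProd (f s) (f t) (M s t) = altProd (f t) (f s) (M s t)) :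
    ArtinGroup M →* G :=
  PresentedGroup.toGroup (f := f) <| by
    rintro _ ⟨s, t, h, rfl⟩
    rw [map_mul, map_inv, map_altProd, map_altProd, mul_inv_eq_one]
    simpa using hf s t h

theorem ArtinGroup.lift_σ {G : Type*} [Group G] (f : B → G)
    (hf : ∀ s t, M s t ≠ 0 → altProd (f s) (f t) (M s t) = altProd (f t) (f s) (M s t))
    (s : B) : ArtinGroup.lift M f hf (σ M s) = f s :=
  PresentedGroup.toGroup.of (f := f) _

theorem apply_eq_self_of_mem_AP {k V : Type*} [CommSemiring k] [AddCommMonoid V] [Module k V]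
    (ρ : Representation k (ArtinGroup M) V) {X : Set B} {v : V}
    (hX : ∀ s ∈ X, ρ (σ M s) v = v) {c : ArtinGroup M} (hc : c ∈ AP M X) : ρ c v = v := by
  induction hc using Subgroup.closure_induction with
  | mem _ hx => obtain ⟨s, hs, rfl⟩ := hx; exact hX s hs
  | one => simp
  | mul a b _ _ ha hb => rw [map_mul, Module.End.mul_apply, hb, ha]
  | inv a _ ha => rw [← ha, Representation.inv_self_apply, ha]

end ArtinGroup

theorem mem_range_sub_one_of_conj {k G V : Type*} [CommSemiring k] [Group G] [AddCommGroup V]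
    [Module k V] (ρ : Representation k G V) {c g h : G} {v : V} (hc : ρ c v = v)
    (hconj : c⁻¹ * g * c = h) (hv : v ∈ LinearMap.range (ρ g - 1)) :
    v ∈ LinearMap.range (ρ h - 1) := by
  obtain ⟨w, hw⟩ := hv
  have hc' : ρ c⁻¹ v = v := by rw [← hc, Representation.inv_self_apply, hc]
  refine ⟨ρ c⁻¹ w, ?_⟩
  simp only [LinearMap.sub_apply, Module.End.one_apply] at hw ⊢
  rw [← hconj, map_mul, map_mul, Module.End.mul_apply, Module.End.mul_apply,
    Representation.self_inv_apply, ← map_sub, hw, hc']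

/-- The reflection `s` of the geometric representation of a simply-laced Coxeter group, reduced
mod 2 in the basis of simple roots: it adds to the `s`-coordinate those of the neighbours of `s`. -/
def reflMod2 {B : Type*} [DecidableEq B] (M : CoxeterMatrix B) (s : B) : Matrix B B (ZMod 2) :=
  Matrix.of fun i j => if i = j ∨ (i = s ∧ M s j = 3) then 1 else 0

local notation "τ" => σ E₆

def e6Conjugator : ArtinGroup E₆ := τ 0 * τ 2 * τ 3 * τ 4 * τ 1 * τ 3 * τ 2 * τ 0

theorem semiconjBy_e6Conjugator_σ4_σ1 : SemiconjBy e6Conjugator (τ 4) (τ 1) := by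
  have hc : e6Conjugator =
      τ 0 * (τ 2 * ((τ 3 * τ 1) * ((τ 4 * τ 3) * (τ 2 * τ 0)))) := by
    simp only [e6Conjugator, mul_assoc, (commute_σ E₆ (s := 4) (t := 1) rfl).left_comm]
  rw [hc]
  refine SemiconjBy.mul_left (commute_σ E₆ rfl) <| SemiconjBy.mul_left (commute_σ E₆ rfl) <|
    (semiconjBy_σ E₆ rfl).mul_left <| (semiconjBy_σ E₆ rfl).mul_left <|
    SemiconjBy.mul_left (commute_σ E₆ rfl) (commute_σ E₆ rfl)

theorem commute_e6Conjugator_σ2 : Commute e6Conjugator (τ 2) := by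
  have hc : e6Conjugator =
      (τ 0 * τ 2) * (τ 3 * (τ 4 * (τ 1 * (τ 3 * (τ 2 * τ 0))))) := by
    simp only [e6Conjugator, mul_assoc]
  rw [hc]
  refine (semiconjBy_σ E₆ rfl).mul_left <| SemiconjBy.mul_left (commute_σ E₆ rfl) <|
    SemiconjBy.mul_left (commute_σ E₆ rfl) <| SemiconjBy.mul_left (commute_σ E₆ rfl) <|
    SemiconjBy.mul_left (commute_σ E₆ rfl) (semiconjBy_σ E₆ rfl)

theorem commute_e6Conjugator_σ3 : Commute e6Conjugator (τ 3) := by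
  have hc : e6Conjugator =
      τ 0 * ((τ 2 * τ 3) * (τ 4 * (τ 1 * ((τ 3 * τ 2) * τ 0)))) := by
    simp only [e6Conjugator, mul_assoc]
  rw [hc]
  refine SemiconjBy.mul_left (commute_σ E₆ rfl) <| (semiconjBy_σ E₆ rfl).mul_left <|
    SemiconjBy.mul_left (commute_σ E₆ rfl) <| SemiconjBy.mul_left (commute_σ E₆ rfl) <|
    (semiconjBy_σ E₆ rfl).mul_left (commute_σ E₆ rfl)

theorem e6Conjugator_inv_mul_mul :
    e6Conjugator⁻¹ * (τ 1 * τ 3 * τ 2) * e6Conjugator = τ 4 * τ 3 * τ 2 := by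
  have hc := (semiconjBy_e6Conjugator_σ4_σ1.mul_right commute_e6Conjugator_σ3).mul_right
    commute_e6Conjugator_σ2
  rw [mul_assoc, ← hc.eq, inv_mul_cancel_left]

theorem reflMod2_E₆_mul_self : ∀ s, reflMod2 E₆ s * reflMod2 E₆ s = 1 := by decide

theorem reflMod2_E₆_braid : ∀ s t, altProd (reflMod2 E₆ s) (reflMod2 E₆ t) (E₆ s t) =
    altProd (reflMod2 E₆ t) (reflMod2 E₆ s) (E₆ s t) := by decide

def reflMod2UnitE₆ (s : Fin 6) : (Matrix (Fin 6) (Fin 6) (ZMod 2))ˣ :=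
  ⟨reflMod2 E₆ s, reflMod2 E₆ s, reflMod2_E₆_mul_self s, reflMod2_E₆_mul_self s⟩

def e6Mod2 : Representation (ZMod 2) (ArtinGroup E₆) (Fin 6 → ZMod 2) :=
  (Matrix.toLinAlgEquiv'.toRingEquiv.toMonoidHom).comp <|
    (Units.coeHom _).comp <| ArtinGroup.lift E₆ reflMod2UnitE₆ fun s t _ => Units.ext <| by
      simp only [← Units.coeHom_apply, map_altProd]
      exact reflMod2_E₆_braid s t

theorem e6Mod2_σ (s : Fin 6) (w : Fin 6 → ZMod 2) : e6Mod2 (τ s) w = reflMod2 E₆ s *ᵥ w := by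
  simp [e6Mod2, ArtinGroup.lift_σ, reflMod2UnitE₆, Matrix.toLinAlgEquiv'_apply]

/-- `α₂ + α₃`, the reduction mod 2 of `3ω₁`; like `ω₁` it is fixed by `s₂, …, s₆`. -/
def e6FixedVector : Fin 6 → ZMod 2 := ![0, 1, 1, 0, 0, 0]

theorem e6Mod2_apply_e6FixedVector_of_mem_AP {c : ArtinGroup E₆}
    (hc : c ∈ AP E₆ ({1, 2, 3, 4, 5} : Set (Fin 6))) : e6Mod2 c e6FixedVector = e6FixedVector := by
  refine apply_eq_self_of_mem_AP E₆ e6Mod2 (fun s hs => ?_) hc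
  rw [e6Mod2_σ]
  revert s
  decide

theorem e6FixedVector_mem_range_σ1_σ3_σ2 :
    e6FixedVector ∈ LinearMap.range (e6Mod2 (τ 1 * τ 3 * τ 2) - 1) := by
  refine ⟨![0, 0, 0, 1, 1, 0], ?_⟩
  simp only [LinearMap.sub_apply, map_mul, Module.End.mul_apply, e6Mod2_σ]
  decide

theorem e6FixedVector_notMem_range_σ4_σ3_σ2 :
    e6FixedVector ∉ LinearMap.range (e6Mod2 (τ 4 * τ 3 * τ 2) - 1) := by
  rintro ⟨w, hw⟩
  simp only [LinearMap.sub_apply, map_mul, Module.End.mul_apply, e6Mod2_σ] at hw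
  revert w
  decide

/-- Counterexample (a) of the paper: in the Artin–Tits group of type `E₆` (vertices `0,…,5`
standing for `s_1,…,s_6`), the elements `g = σ_2 σ_4 σ_3` and `h = σ_5 σ_4 σ_3` of the standard
parabolic subgroup of type `D₅` on `{s_2,…,s_6}` are conjugate in `A_S` but not in `A_X`; in
particular `A_X` is not conjugacy stable in `A_S`. -/
theorem E6_D5_not_conjugacy_stable :
    (∃ c : ArtinGroup E₆,
        c⁻¹ * (σ E₆ 1 * σ E₆ 3 * σ E₆ 2) * c = σ E₆ 4 * σ E₆ 3 * σ E₆ 2) ∧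
    (¬ ∃ c ∈ AP E₆ ({1, 2, 3, 4, 5} : Set (Fin 6)),
        c⁻¹ * (σ E₆ 1 * σ E₆ 3 * σ E₆ 2) * c = σ E₆ 4 * σ E₆ 3 * σ E₆ 2) ∧
    ¬ IsConjugacyStable (AP E₆ ({1, 2, 3, 4, 5} : Set (Fin 6))) := by
  have not_conj : ¬ ∃ c ∈ AP E₆ ({1, 2, 3, 4, 5} : Set (Fin 6)),
      c⁻¹ * (τ 1 * τ 3 * τ 2) * c = τ 4 * τ 3 * τ 2 := by
    rintro ⟨c, hc, hconj⟩
    exact e6FixedVector_notMem_range_σ4_σ3_σ2 <| mem_range_sub_one_of_conj e6Mod2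
      (e6Mod2_apply_e6FixedVector_of_mem_AP hc) hconj e6FixedVector_mem_range_σ1_σ3_σ2
  refine ⟨⟨e6Conjugator, e6Conjugator_inv_mul_mul⟩, not_conj, fun hstable => not_conj ?_⟩
  have hX : ∀ s ∈ ({1, 2, 3, 4, 5} : Set (Fin 6)), τ s ∈ AP E₆ {1, 2, 3, 4, 5} :=
    fun _ hs => σ_mem_AP E₆ hs
  refine hstable _ _ ?_ ?_ ⟨e6Conjugator, e6Conjugator_inv_mul_mul⟩
  · exact mul_mem (mul_mem (hX 1 (by simp)) (hX 3 (by simp))) (hX 2 (by simp))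
  · exact mul_mem (mul_mem (hX 4 (by simp)) (hX 3 (by simp))) (hX 2 (by simp))

end ArtinTits
end
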